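/- Let C be the multiplicative group of positive-real-valued differentiable functions on [0,1], and let ⋀²C = (C⊗C)/S²C be its exterior square over ℤ. Suppose f₁,…,f_m ∈ C take values in (0,1) and satisfy Σ_{t=1}^m f_t ∧ (1 - f_t) = 0 in ⋀²C. Then u ↦ Σ_{t=1}^m L(f_t(u)) is constant on [0,1], where L is the Rogers dilogarithm. -/

import Mathlib

/-!
For `0 < x < 1` one has `L'(x) = -½ (log(1-x)/x + log x/(1-x))`, so for `f` with values in `(0,1)`
the derivative of `L ∘ f` at `u` is
`½ (log f(u) · (log(1-f))'(u) - log(1-f(u)) · (log f)'(u))`.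
This is the value on `f ⊗ (1-f)` of the biadditive map
`a ⊗ b ↦ log a(u) (log b)'(u) - log b(u) (log a)'(u)`,
which is alternating and hence kills `S²C`. The hypothesis therefore makes
the derivative of `Σ L(f_t)` vanish everywhere.
-/

open MeasureTheory Real TensorProduct

/-- The Euler dilogarithm `Li₂(x) = -∫₀ˣ log(1-y)/y dy`. -/
noncomputable def Li2 (x : ℝ) : ℝ := -∫ y in (0:ℝ)..x, Real.log (1 - y) / y

/-- The Rogers dilogarithm. -/
noncomputable def RL (x : ℝ) : ℝ := Li2 x + (1/2) * Real.log x * Real.log (1 - x)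

/-- The multiplicative abelian group of positive-valued differentiable real functions. -/
def PD : Type := {f : ℝ → ℝ // (∀ x, 0 < f x) ∧ Differentiable ℝ f}

noncomputable instance : CommGroup PD where
  mul f g := ⟨fun x => f.1 x * g.1 x,
    fun x => mul_pos (f.2.1 x) (g.2.1 x), f.2.2.mul g.2.2⟩
  one := ⟨fun _ => 1, fun _ => one_pos, differentiable_const 1⟩
  inv f := ⟨fun x => (f.1 x)⁻¹,
    fun x => inv_pos.2 (f.2.1 x), f.2.2.inv fun x => (f.2.1 x).ne'⟩
  mul_assoc a b c := Subtype.ext (funext fun x => mul_assoc _ _ _)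
  one_mul a := Subtype.ext (funext fun x => one_mul _)
  mul_one a := Subtype.ext (funext fun x => mul_one _)
  inv_mul_cancel a := Subtype.ext (funext fun x => inv_mul_cancel₀ (a.2.1 x).ne')
  mul_comm a b := Subtype.ext (funext fun x => mul_comm _ _)

/-- The symmetric subgroup `S²C` of `C ⊗ C`. -/
noncomputable def SymSub : AddSubgroup (TensorProduct ℤ (Additive PD) (Additive PD)) :=
  AddSubgroup.closure {t | ∃ a b : Additive PD, t = a ⊗ₜ[ℤ] b + b ⊗ₜ[ℤ] a}

lemma abs_log_one_sub_div_le {y : ℝ} (h0 : 0 < y) (h1 : y < 1) :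
    |log (1 - y) / y| ≤ (1 - y)⁻¹ := by
  have hlow : 1 - (1 - y)⁻¹ ≤ log (1 - y) := one_sub_inv_le_log_of_pos (by linarith)
  have hneg : log (1 - y) ≤ 0 := log_nonpos (by linarith) (by linarith)
  rw [abs_div, abs_of_nonpos hneg, abs_of_pos h0, div_le_iff₀ h0]
  have : 1 - (1 - y)⁻¹ = -((1 - y)⁻¹ * y) := by field_simp [sub_ne_zero.2 h1.ne']; ring
  linarith

lemma measurable_log_one_sub_div : Measurable fun y : ℝ => log (1 - y) / y := by
  fun_prop

lemma intervalIntegrable_log_one_sub_div {b : ℝ} (hb0 : 0 ≤ b) (hb1 : b < 1) :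
    IntervalIntegrable (fun y => log (1 - y) / y) volume 0 b := by
  refine IntervalIntegrable.mono_fun' (g := fun _ => (1 - b)⁻¹) intervalIntegrable_const
    measurable_log_one_sub_div.aestronglyMeasurable ?_
  rw [Set.uIoc_of_le hb0]
  refine (ae_restrict_iff' measurableSet_Ioc).2 (Filter.Eventually.of_forall fun y hy => ?_)
  calc ‖log (1 - y) / y‖ ≤ (1 - y)⁻¹ := abs_log_one_sub_div_le hy.1 (hy.2.trans_lt hb1)
    _ ≤ (1 - b)⁻¹ := inv_anti₀ (by linarith) (by linarith [hy.2])

lemma hasDerivAt_Li2 {x : ℝ} (h0 : 0 < x) (h1 : x < 1) :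
    HasDerivAt Li2 (-(log (1 - x) / x)) x := by
  have hcont : ContinuousAt (fun y => log (1 - y) / y) x :=
    ((continuousAt_log (by linarith)).comp (by fun_prop)).div continuousAt_id h0.ne'
  exact (intervalIntegral.integral_hasDerivAt_right (intervalIntegrable_log_one_sub_div h0.le h1)
    measurable_log_one_sub_div.stronglyMeasurable.stronglyMeasurableAtFilter hcont).neg

lemma hasDerivAt_RL {x : ℝ} (h0 : 0 < x) (h1 : x < 1) :
    HasDerivAt RL (-(1 / 2) * (log (1 - x) / x + log x / (1 - x))) x := by
  have hlog : HasDerivAt log x⁻¹ x := hasDerivAt_log h0.ne'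
  have hlog_one_sub : HasDerivAt (fun y => log (1 - y)) (-1 / (1 - x)) x := by
    simpa using ((hasDerivAt_id x).const_sub 1).log (by simp; linarith)
  refine ((hasDerivAt_Li2 h0 h1).fun_add
    ((hlog.const_mul (1 / 2)).fun_mul hlog_one_sub)).congr_deriv ?_
  field_simp [sub_ne_zero.2 h1.ne']
  ring

section Wedge

variable {M R : Type*} [AddCommGroup M] [CommRing R]

def wedgeForm (φ ψ : M →+ R) : M →ₗ[ℤ] M →ₗ[ℤ] R :=
  LinearMap.mk₂ ℤ (fun a b => φ a * ψ b - φ b * ψ a)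
    (fun a a' b => by simp only [map_add]; ring)
    (fun n a b => by simp only [map_zsmul, zsmul_eq_mul]; ring)
    (fun a b b' => by simp only [map_add]; ring)
    (fun n a b => by simp only [map_zsmul, zsmul_eq_mul]; ring)

@[simp]
lemma wedgeForm_apply (φ ψ : M →+ R) (a b : M) :
    wedgeForm φ ψ a b = φ a * ψ b - φ b * ψ a := rfl

lemma wedgeForm_swap (φ ψ : M →+ R) (a b : M) : wedgeForm φ ψ b a = -wedgeForm φ ψ a b := by
  simp only [wedgeForm_apply]; ring

end Wedge

lemma closure_symm_tmul_le_ker_lift {M N : Type*} [AddCommGroup M] [AddCommGroup N]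
    (B : M →ₗ[ℤ] M →ₗ[ℤ] N) (hB : ∀ a b, B b a = -B a b) :
    AddSubgroup.closure {t | ∃ a b : M, t = a ⊗ₜ[ℤ] b + b ⊗ₜ[ℤ] a} ≤
      (TensorProduct.lift B).toAddMonoidHom.ker := by
  rw [AddSubgroup.closure_le]
  rintro _ ⟨a, b, rfl⟩
  rw [SetLike.mem_coe, AddMonoidHom.mem_ker, LinearMap.toAddMonoidHom_coe, map_add,
    TensorProduct.lift.tmul, TensorProduct.lift.tmul, hB a b, add_neg_cancel]

namespace PD

noncomputable def logAt (u : ℝ) : Additive PD →+ ℝ :=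
  AddMonoidHom.mk' (fun a => log (a.toMul.1 u)) fun a b =>
    log_mul (a.toMul.2.1 u).ne' (b.toMul.2.1 u).ne'

noncomputable def logDerivAt (u : ℝ) : Additive PD →+ ℝ :=
  AddMonoidHom.mk' (fun a => logDeriv a.toMul.1 u) fun a b =>
    logDeriv_mul u (a.toMul.2.1 u).ne' (b.toMul.2.1 u).ne' (a.toMul.2.2 u) (b.toMul.2.2 u)

lemma lift_wedgeForm_eq_zero_of_mem_symSub (u : ℝ) {x : Additive PD ⊗[ℤ] Additive PD}
    (hx : x ∈ SymSub) : TensorProduct.lift (wedgeForm (logAt u) (logDerivAt u)) x = 0 :=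
  closure_symm_tmul_le_ker_lift _ (wedgeForm_swap _ _) hx

lemma hasDerivAt_RL_comp (a b : PD) (hab : ∀ x, b.1 x = 1 - a.1 x) {w : ℝ} (ha1 : a.1 w < 1) :
    HasDerivAt (fun x => RL (a.1 x))
      ((1 / 2) * wedgeForm (logAt w) (logDerivAt w) (.ofMul a) (.ofMul b)) w := by
  have ha0 := a.2.1 w
  have hb : b.1 = fun x => 1 - a.1 x := funext hab
  refine ((hasDerivAt_RL ha0 ha1).comp w (a.2.2 w).hasDerivAt).congr_deriv ?_
  simp only [wedgeForm_apply, logAt, logDerivAt, AddMonoidHom.mk'_apply, toMul_ofMul, hb,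
    logDeriv_apply, deriv_const_sub]
  field_simp [sub_ne_zero.2 ha1.ne']
  ring

end PD

theorem rogers_constancy
    (m : ℕ) (f g : Fin m → PD)
    (hf1 : ∀ t, ∀ x : ℝ, (f t).1 x < 1)
    (hg : ∀ t, ∀ x : ℝ, (g t).1 x = 1 - (f t).1 x)
    (hwedge : QuotientAddGroup.mk' SymSub
      (∑ t, (Additive.ofMul (f t)) ⊗ₜ[ℤ] (Additive.ofMul (g t))) = 0) :
    ∀ u ∈ Set.Icc (0:ℝ) 1, ∀ v ∈ Set.Icc (0:ℝ) 1,
      ∑ t, RL ((f t).1 u) = ∑ t, RL ((f t).1 v) := by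
  intro u _ v _
  rw [QuotientAddGroup.mk'_apply, QuotientAddGroup.eq_zero_iff] at hwedge
  have hderiv (w : ℝ) : HasDerivAt (fun x => ∑ t, RL ((f t).1 x)) 0 w := by
    have hsum := HasDerivAt.fun_sum fun t (_ : t ∈ Finset.univ) =>
      PD.hasDerivAt_RL_comp (f t) (g t) (hg t) (hf1 t w)
    have hzero := PD.lift_wedgeForm_eq_zero_of_mem_symSub w hwedge
    simp only [map_sum, TensorProduct.lift.tmul] at hzero
    rwa [← Finset.mul_sum, hzero, mul_zero] at hsum
  exact is_const_of_deriv_eq_zero (fun x => (hderiv x).differentiableAt)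
    (fun x => (hderiv x).deriv) u v
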